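/- A finite nilpotent group is a Beauville group if and only if each of its Sylow subgroups is a Beauville group. -/
import Mathlib


/-- The set Σ(x,y): all conjugates of all powers of x, y and xy. -/
def BSigma {G : Type*} [Group G] (x y : G) : Set G :=
  {a | ∃ (i : ℕ) (g : G), a = g⁻¹ * x ^ i * g ∨ a = g⁻¹ * y ^ i * g ∨ a = g⁻¹ * (x * y) ^ i * g}

/-- An unmixed Beauville structure on a group. -/
def IsBeauvilleStructure {G : Type*} [Group G] (x₁ y₁ x₂ y₂ : G) : Prop :=
  Subgroup.closure {x₁, y₁} = ⊤ ∧ Subgroup.closure {x₂, y₂} = ⊤ ∧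
  BSigma x₁ y₁ ∩ BSigma x₂ y₂ = {1}

/-- A Beauville group: a finite group admitting an unmixed Beauville structure. -/
def IsBeauvilleGroup (G : Type*) [Group G] [Finite G] : Prop :=
  ∃ x₁ y₁ x₂ y₂ : G, IsBeauvilleStructure x₁ y₁ x₂ y₂

section Aux

open Subgroup

variable {G H : Type*} [Group G] [Group H]

lemma one_mem_BSigma (x y : G) : (1 : G) ∈ BSigma x y :=
  ⟨0, 1, Or.inl (by simp)⟩

lemma map_mem_BSigma (e : G →* H) {x y a : G} (h : a ∈ BSigma x y) :
    e a ∈ BSigma (e x) (e y) := by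
  obtain ⟨i, g, hc | hc | hc⟩ := h
  · exact ⟨i, e g, Or.inl (by simp [hc])⟩
  · exact ⟨i, e g, Or.inr (Or.inl (by simp [hc]))⟩
  · exact ⟨i, e g, Or.inr (Or.inr (by simp [hc]))⟩

lemma isBeauvilleGroup_of_mulEquiv [Finite G] [Finite H] (e : G ≃* H)
    (hG : IsBeauvilleGroup G) : IsBeauvilleGroup H := by
  obtain ⟨x₁, y₁, x₂, y₂, h1, h2, h3⟩ := hG
  have hgen : ∀ x y : G, Subgroup.closure {x, y} = ⊤ →
      Subgroup.closure {e x, e y} = (⊤ : Subgroup H) := by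
    intro x y hxy
    have : ({e x, e y} : Set H) = e.toMonoidHom '' {x, y} := by
      simp [Set.image_insert_eq]
    rw [this, ← MonoidHom.map_closure, hxy]
    exact Subgroup.map_top_of_surjective _ e.surjective
  refine ⟨e x₁, e y₁, e x₂, e y₂, hgen _ _ h1, hgen _ _ h2, ?_⟩
  ext a
  simp only [Set.mem_inter_iff, Set.mem_singleton_iff]
  constructor
  · rintro ⟨hA, hB⟩
    have hA' := map_mem_BSigma e.symm.toMonoidHom hA
    have hB' := map_mem_BSigma e.symm.toMonoidHom hB
    simp only [MulEquiv.coe_toMonoidHom, MulEquiv.symm_apply_apply] at hA' hB'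
    have : e.symm a ∈ BSigma x₁ y₁ ∩ BSigma x₂ y₂ := ⟨hA', hB'⟩
    rw [h3, Set.mem_singleton_iff] at this
    have := congrArg e this
    simpa using this
  · rintro rfl
    exact ⟨one_mem_BSigma _ _, one_mem_BSigma _ _⟩

lemma isBeauvilleGroup_of_subsingleton [Finite G] [Subsingleton G] :
    IsBeauvilleGroup G := by
  refine ⟨1, 1, 1, 1, Subsingleton.elim _ _, Subsingleton.elim _ _, ?_⟩
  ext a
  simp only [Set.mem_inter_iff, Set.mem_singleton_iff]
  constructor
  · intro _; exact Subsingleton.elim a 1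
  · rintro rfl; exact ⟨one_mem_BSigma _ _, one_mem_BSigma _ _⟩

variable {ι : Type*} [Fintype ι] [DecidableEq ι] {F : ι → Type*}
  [∀ i, Group (F i)] [∀ i, Finite (F i)]

lemma apply_mem_BSigma {x y v : ∀ j, F j} (hv : v ∈ BSigma x y) (i : ι) :
    v i ∈ BSigma (x i) (y i) := by
  obtain ⟨k, g, hc | hc | hc⟩ := hv
  · exact ⟨k, g i, Or.inl (by rw [hc]; simp)⟩
  · exact ⟨k, g i, Or.inr (Or.inl (by rw [hc]; simp))⟩
  · exact ⟨k, g i, Or.inr (Or.inr (by rw [hc]; simp))⟩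

lemma mulSingle_mem_BSigma
    (hcop : Pairwise fun i j => (Nat.card (F i)).Coprime (Nat.card (F j)))
    (i : ι) {x y : ∀ j, F j} {a : F i} (ha : a ∈ BSigma (x i) (y i)) :
    Pi.mulSingle i a ∈ BSigma x y := by
  obtain ⟨k, h, hc⟩ := ha
  set M := Nat.card (F i) with hM
  set N := ∏ j ∈ Finset.univ.erase i, Nat.card (F j) with hN
  have hMN : M.Coprime N :=
    Nat.Coprime.prod_right fun j hj => hcop (Finset.ne_of_mem_erase hj).symm
  obtain ⟨k', hk'1, hk'2⟩ := Nat.chineseRemainder hMN k 0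
  have hNk' : N ∣ k' := (Nat.modEq_zero_iff_dvd).mp hk'2
  have key : ∀ (z : ∀ j, F j) (h : F i),
      Pi.mulSingle i (h⁻¹ * (z i) ^ k * h) =
        (Pi.mulSingle i h)⁻¹ * z ^ k' * Pi.mulSingle i h := by
    intro z h
    funext j
    by_cases hji : j = i
    · subst hji
      simp only [Pi.mul_apply, Pi.inv_apply, Pi.pow_apply, Pi.mulSingle_eq_same]
      congr 2
      refine (pow_eq_pow_iff_modEq.mpr ?_).symm
      exact (hk'1.of_dvd (orderOf_dvd_natCard (z j)))
    · simp only [Pi.mul_apply, Pi.inv_apply, Pi.pow_apply,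
        Pi.mulSingle_eq_of_ne hji]
      have hdvd : orderOf (z j) ∣ k' :=
        dvd_trans (orderOf_dvd_natCard (z j))
          (dvd_trans (Finset.dvd_prod_of_mem (fun j => Nat.card (F j))
            (Finset.mem_erase.mpr ⟨hji, Finset.mem_univ j⟩)) hNk')
      rw [orderOf_dvd_iff_pow_eq_one.mp hdvd]
      simp
  rcases hc with hc | hc | hc
  · exact ⟨k', Pi.mulSingle i h, Or.inl (by rw [hc, key x h])⟩
  · exact ⟨k', Pi.mulSingle i h, Or.inr (Or.inl (by rw [hc, key y h]))⟩
  · exact ⟨k', Pi.mulSingle i h, Or.inr (Or.inr (by rw [hc]; exact key (x * y) h))⟩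

lemma exists_pow_eq_mulSingle
    (hcop : Pairwise fun i j => (Nat.card (F i)).Coprime (Nat.card (F j)))
    (i : ι) (x : ∀ j, F j) : ∃ k : ℕ, x ^ k = Pi.mulSingle i (x i) := by
  set M := Nat.card (F i) with hM
  set N := ∏ j ∈ Finset.univ.erase i, Nat.card (F j) with hN
  have hMN : M.Coprime N :=
    Nat.Coprime.prod_right fun j hj => hcop (Finset.ne_of_mem_erase hj).symm
  obtain ⟨k', hk'1, hk'2⟩ := Nat.chineseRemainder hMN 1 0
  have hNk' : N ∣ k' := (Nat.modEq_zero_iff_dvd).mp hk'2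
  refine ⟨k', funext fun j => ?_⟩
  by_cases hji : j = i
  · subst hji
    simp only [Pi.pow_apply, Pi.mulSingle_eq_same]
    have : x j ^ k' = x j ^ 1 :=
      pow_eq_pow_iff_modEq.mpr (hk'1.of_dvd (orderOf_dvd_natCard (x j)))
    simpa using this
  · simp only [Pi.pow_apply, Pi.mulSingle_eq_of_ne hji]
    have hdvd : orderOf (x j) ∣ k' :=
      dvd_trans (orderOf_dvd_natCard (x j))
        (dvd_trans (Finset.dvd_prod_of_mem (fun j => Nat.card (F j))
          (Finset.mem_erase.mpr ⟨hji, Finset.mem_univ j⟩)) hNk')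
    exact orderOf_dvd_iff_pow_eq_one.mp hdvd

lemma pi_isBeauvilleGroup
    (hcop : Pairwise fun i j => (Nat.card (F i)).Coprime (Nat.card (F j))) :
    IsBeauvilleGroup (∀ i, F i) ↔ ∀ i, IsBeauvilleGroup (F i) := by
  constructor
  · rintro ⟨x₁, y₁, x₂, y₂, h1, h2, h3⟩ i
    have hsurj : Function.Surjective (Pi.evalMonoidHom F i) := fun b =>
      ⟨Pi.mulSingle i b, by simp [Pi.evalMonoidHom]⟩
    have hgen : ∀ x y : ∀ j, F j, Subgroup.closure {x, y} = ⊤ →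
        Subgroup.closure {x i, y i} = (⊤ : Subgroup (F i)) := by
      intro x y hxy
      have : ({x i, y i} : Set (F i)) = (Pi.evalMonoidHom F i) '' {x, y} := by
        simp [Set.image_insert_eq, Pi.evalMonoidHom]
      rw [this, ← MonoidHom.map_closure, hxy]
      exact Subgroup.map_top_of_surjective _ hsurj
    refine ⟨x₁ i, y₁ i, x₂ i, y₂ i, hgen _ _ h1, hgen _ _ h2, ?_⟩
    ext a
    simp only [Set.mem_inter_iff, Set.mem_singleton_iff]
    constructor
    · rintro ⟨hA, hB⟩
      have hA' := mulSingle_mem_BSigma hcop i hA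
      have hB' := mulSingle_mem_BSigma hcop i hB
      have hone : Pi.mulSingle i a ∈ BSigma x₁ y₁ ∩ BSigma x₂ y₂ := ⟨hA', hB'⟩
      rw [h3, Set.mem_singleton_iff] at hone
      have := congrFun hone i
      simpa using this
    · rintro rfl
      exact ⟨one_mem_BSigma _ _, one_mem_BSigma _ _⟩
  · intro h
    choose a b c d hs using h
    have hone : ∀ (x y : ∀ j, F j),
        (∀ i, BSigma (x i) (y i) ∩ BSigma (c i) (d i) ⊆ {1}) → True := fun _ _ _ => trivial
    have hgen : ∀ (x y : ∀ j, F j),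
        (∀ i, Subgroup.closure {x i, y i} = (⊤ : Subgroup (F i))) →
        Subgroup.closure {x, y} = ⊤ := by
      intro x y hxy
      rw [eq_top_iff]
      intro f _
      apply Subgroup.pi_mem_of_mulSingle_mem
      intro i
      -- the generators' mulSingles are in the closure
      have hxmem : Pi.mulSingle i (x i) ∈ Subgroup.closure ({x, y} : Set (∀ j, F j)) := by
        obtain ⟨k, hk⟩ := exists_pow_eq_mulSingle hcop i x
        rw [← hk]
        exact pow_mem (Subgroup.subset_closure (by simp)) k
      have hymem : Pi.mulSingle i (y i) ∈ Subgroup.closure ({x, y} : Set (∀ j, F j)) := by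
        obtain ⟨k, hk⟩ := exists_pow_eq_mulSingle hcop i y
        rw [← hk]
        exact pow_mem (Subgroup.subset_closure (by simp)) k
      have hfi : f i ∈ Subgroup.closure ({x i, y i} : Set (F i)) := by
        rw [hxy i]; trivial
      have : Pi.mulSingle i (f i) ∈
          Subgroup.map (MonoidHom.mulSingle F i) (Subgroup.closure {x i, y i}) :=
        ⟨f i, hfi, rfl⟩
      rw [MonoidHom.map_closure] at this
      refine Subgroup.closure_le (K := Subgroup.closure ({x, y} : Set (∀ j, F j))) |>.mpr
        ?_ this
      rintro v ⟨w, hw | hw, rfl⟩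
      · subst hw; exact hxmem
      · simp only [Set.mem_singleton_iff] at hw; subst hw; exact hymem
    refine ⟨a, b, c, d, hgen a b fun i => (hs i).1, hgen c d fun i => (hs i).2.1, ?_⟩
    ext v
    simp only [Set.mem_inter_iff, Set.mem_singleton_iff]
    constructor
    · rintro ⟨hA, hB⟩
      funext i
      have hA' := apply_mem_BSigma hA i
      have hB' := apply_mem_BSigma hB i
      have : v i ∈ BSigma (a i) (b i) ∩ BSigma (c i) (d i) := ⟨hA', hB'⟩
      rw [(hs i).2.2, Set.mem_singleton_iff] at this
      simpa using this
    · rintro rfl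
      exact ⟨one_mem_BSigma _ _, one_mem_BSigma _ _⟩

end Aux

theorem stmt_4 (G : Type*) [Group G] [Finite G] (hnil : Group.IsNilpotent G) :
    IsBeauvilleGroup G ↔
      ∀ (p : ℕ), p.Prime → ∀ P : Sylow p G, IsBeauvilleGroup P := by
  classical
  have hn : ∀ (p : ℕ) (_ : Fact p.Prime) (P : Sylow p G), (↑P : Subgroup G).Normal :=
    ((isNilpotent_of_finite_tfae (G := G)).out 0 3).mp hnil
  -- unique Sylow for each prime
  have huniq : ∀ (p : ℕ) [Fact p.Prime], Unique (Sylow p G) := fun p hp =>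
    Sylow.unique_of_normal _ (hn p hp default)
  -- the direct product decomposition
  let e := Sylow.directProductOfNormal (G := G) (fun {p hp} P => hn p hp P)
  set ps := (Nat.card G).primeFactors with hps
  haveI : ∀ p : ps, Fact (p : ℕ).Prime := fun p =>
    ⟨Nat.prime_of_mem_primeFactors p.2⟩
  -- coprimality of cards of the factors
  have hcard : ∀ p : ps, Nat.card (∀ P : Sylow (p : ℕ) G, P) =
      (p : ℕ) ^ (Nat.card G).factorization (p : ℕ) := by
    intro p
    haveI hu := huniq (p : ℕ)
    calc Nat.card (∀ P : Sylow (p : ℕ) G, P)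
        = Nat.card ↥(@default (Sylow (p : ℕ) G) hu.instInhabited) :=
          Nat.card_congr (Equiv.piUnique _)
      _ = Nat.card ↥((@default (Sylow (p : ℕ) G) hu.instInhabited : Sylow (p : ℕ) G) :
            Subgroup G) := rfl
      _ = (p : ℕ) ^ (Nat.card G).factorization (p : ℕ) := Sylow.card_eq_multiplicity _
  have hcop : Pairwise fun p q : ps =>
      (Nat.card (∀ P : Sylow (p : ℕ) G, P)).Coprime
        (Nat.card (∀ P : Sylow (q : ℕ) G, P)) := by
    intro p q hpq
    rw [hcard p, hcard q]
    have hne : (p : ℕ) ≠ (q : ℕ) := fun h => hpq (Subtype.ext h)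
    exact Nat.Coprime.pow _ _ ((Nat.coprime_primes (Nat.prime_of_mem_primeFactors p.2)
      (Nat.prime_of_mem_primeFactors q.2)).mpr hne)
  have key : IsBeauvilleGroup G ↔
      ∀ p : ps, IsBeauvilleGroup (∀ P : Sylow (p : ℕ) G, P) := by
    rw [← pi_isBeauvilleGroup hcop]
    exact ⟨fun h => isBeauvilleGroup_of_mulEquiv e.symm h,
      fun h => isBeauvilleGroup_of_mulEquiv e h⟩
  rw [key]
  constructor
  · intro h p hp P
    haveI := Fact.mk hp
    by_cases hdvd : p ∣ Nat.card G
    · have hpmem : p ∈ ps := Nat.mem_primeFactors.mpr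
        ⟨hp, hdvd, Nat.card_pos.ne'⟩
      haveI : Subsingleton (Sylow p G) := (huniq p).instSubsingleton
      haveI : Unique (Sylow p G) := ⟨⟨P⟩, fun Q => Subsingleton.elim Q P⟩
      have hthis : IsBeauvilleGroup (∀ Q : Sylow p G, Q) := h ⟨p, hpmem⟩
      have hres : IsBeauvilleGroup ↥(@default (Sylow p G) Unique.instInhabited) :=
        isBeauvilleGroup_of_mulEquiv
          (MulEquiv.piUnique fun Q : Sylow p G => ↥Q) hthis
      have hdef : (@default (Sylow p G) Unique.instInhabited) = P := Subsingleton.elim _ _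
      rw [← hdef]
      exact hres
    · -- Sylow is trivial
      have hcardP : Nat.card P = 1 := by
        rw [Sylow.card_eq_multiplicity P, Nat.factorization_eq_zero_of_not_dvd hdvd,
          pow_zero]
      haveI : Subsingleton P := by
        rw [Nat.card_eq_one_iff_unique] at hcardP
        exact hcardP.1
      exact isBeauvilleGroup_of_subsingleton
  · intro h p
    haveI hu := huniq (p : ℕ)
    have hP : IsBeauvilleGroup ↥(@default (Sylow (p : ℕ) G) hu.instInhabited) :=
      h p (Nat.prime_of_mem_primeFactors p.2) (@default (Sylow (p : ℕ) G) hu.instInhabited)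
    exact isBeauvilleGroup_of_mulEquiv
      (MulEquiv.piUnique fun P : Sylow (p : ℕ) G => ↥P).symm hP
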